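/- arXiv:math/0404172 — 2 statements merged into one kernel-verified Lean document; each statement's English description precedes it below -/
import Mathlib

section
/- For n ≥ 2 and doubly pure elements a, b of the Cayley–Dickson algebra A_n: (5) ⟨ã, b⟩ = 0 if and only if a·b = b̃·ã; and (6) both ⟨a,b⟩ = 0 and ⟨ã,b⟩ = 0 hold if and only if ã·b = a·b̃. -/
noncomputable section

/-- The Cayley–Dickson algebra `A n` of dimension `2^n` over `ℝ`:
`A 0 = ℝ` and `A (n+1) = A n × A n`. -/
def CD : ℕ → Type
  | 0 => ℝ
  | n + 1 => CD n × CD n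

namespace CD

instance instAddCommGroup : (n : ℕ) → AddCommGroup (CD n)
  | 0 => inferInstanceAs (AddCommGroup ℝ)
  | n + 1 =>
    letI := instAddCommGroup n
    inferInstanceAs (AddCommGroup (CD n × CD n))

instance instModule : (n : ℕ) → Module ℝ (CD n)
  | 0 => inferInstanceAs (Module ℝ ℝ)
  | n + 1 =>
    letI := instAddCommGroup n
    letI := instModule n
    inferInstanceAs (Module ℝ (CD n × CD n))

/-- Conjugation: `x̄ = x` on `ℝ` and `(x₁,x₂)‾ = (x̄₁, -x₂)`. -/
protected def conj : {n : ℕ} → CD n → CD n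
  | 0, x => x
  | _ + 1, x => (CD.conj x.1, -x.2)

/-- Cayley–Dickson multiplication: `(a,b)(x,y) = (ax - ȳb, ya + bx̄)`. -/
protected def mul : {n : ℕ} → CD n → CD n → CD n
  | 0, x, y => (show ℝ from x) * (show ℝ from y)
  | _ + 1, x, y =>
    (CD.mul x.1 y.1 - CD.mul (CD.conj y.2) x.2,
     CD.mul y.2 x.1 + CD.mul x.2 (CD.conj y.1))

instance instMul (n : ℕ) : Mul (CD n) := ⟨CD.mul⟩

/-- The multiplicative unit `e₀` of `A n`. -/
def e0 : (n : ℕ) → CD n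
  | 0 => (1 : ℝ)
  | n + 1 => (e0 n, 0)

/-- The element `ẽ₀ = (0, e₀)` of `A n` (junk value `0` for `n = 0`). -/
def te0 : (n : ℕ) → CD n
  | 0 => 0
  | n + 1 => (0, e0 n)

/-- The "complexification" `α̃ = (-b, a)` of `α = (a,b)` (junk value `0` for `n = 0`);
note `α̃ = α·ẽ₀`. -/
def tilde : {n : ℕ} → CD n → CD n
  | 0, _ => 0
  | _ + 1, x => (-x.2, x.1)

/-- The standard inner product on `A n ≅ ℝ^{2^n}`. -/
protected def inner : {n : ℕ} → CD n → CD n → ℝ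
  | 0, x, y => (show ℝ from x) * (show ℝ from y)
  | _ + 1, x, y => CD.inner x.1 y.1 + CD.inner x.2 y.2

/-- The euclidean norm on `A n`. -/
protected def norm {n : ℕ} (x : CD n) : ℝ := Real.sqrt (CD.inner x x)

/-- `x` is pure if its trace `t(x) = x + x̄` vanishes. -/
def IsPure {n : ℕ} (x : CD n) : Prop := x + CD.conj x = 0

/-- `x = (a,b)` is doubly pure if both `a` and `b` are pure
(equivalently, both `x` and `x̃` are pure). -/
def IsDoublyPure : {n : ℕ} → CD n → Prop
  | 0, x => x = 0
  | _ + 1, x => IsPure x.1 ∧ IsPure x.2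

/-- The associator `(x,y,z) = (xy)z - x(yz)`. -/
def assoc {n : ℕ} (x y z : CD n) : CD n := (x * y) * z - x * (y * z)

/-- The subspace `ℍ_a`: the real span of `{e₀, ã, a, ẽ₀}`. -/
def Ha {n : ℕ} (a : CD n) : Submodule ℝ (CD n) :=
  Submodule.span ℝ {e0 n, tilde a, a, te0 n}

/-- The orthogonal complement `ℍ_a^⊥` of `ℍ_a` in `A n`. -/
def HaPerp {n : ℕ} (a : CD n) : Set (CD n) :=
  {x | ∀ y ∈ Ha a, CD.inner x y = 0}

/-- The element `ε = (ẽ₀, 0)` of `A (n+1)`. -/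
def eps (n : ℕ) : CD (n + 1) := (te0 n, 0)

/-- `α̂ = (b,a)` for `α = (a,b) ∈ A (n+1)`. -/
def hat {n : ℕ} (x : CD (n + 1)) : CD (n + 1) := (x.2, x.1)

/-- The element `(a, b)` of `A (n+1) = A n × A n`. -/
def pair {n : ℕ} (a b : CD n) : CD (n + 1) := (a, b)

end CD

namespace CD
set_option linter.dupNamespace false
variable {n : ℕ}

lemma pair_eq_iff (a b c d : CD n) : pair a b = pair c d ↔ a = c ∧ b = d :=
  Iff.of_eq (Prod.mk.injEq a b c d)

lemma eta (x : CD (n + 1)) : x = pair x.1 x.2 := rfl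

lemma pair_add (a b c d : CD n) : pair a b + pair c d = pair (a + c) (b + d) := rfl
lemma pair_neg (a b : CD n) : -pair a b = pair (-a) (-b) := rfl
lemma pair_smul (r : ℝ) (a b : CD n) : r • pair a b = pair (r • a) (r • b) := rfl
lemma pair_mul (a b c d : CD n) :
    pair a b * pair c d = pair (a * c - CD.conj d * b) (d * a + b * CD.conj c) := rfl
lemma pair_conj (a b : CD n) : CD.conj (pair a b) = pair (CD.conj a) (-b) := rfl
lemma pair_inner (a b c d : CD n) :
    CD.inner (pair a b) (pair c d) = CD.inner a c + CD.inner b d := rfl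
lemma pair_tilde (a b : CD n) : CD.tilde (pair a b) = pair (-b) a := rfl
lemma e0_succ : e0 (n + 1) = pair (e0 n) 0 := rfl

end CD

namespace CD
set_option linter.dupNamespace false

lemma conj_neg : ∀ {n : ℕ} (x : CD n), CD.conj (-x) = -CD.conj x
  | 0, _ => rfl
  | n + 1, x => by
    rw [eta x, pair_neg, pair_conj, pair_conj, pair_neg, conj_neg x.1]

lemma conj_conj : ∀ {n : ℕ} (x : CD n), CD.conj (CD.conj x) = x
  | 0, _ => rfl
  | n + 1, x => by
    rw [eta x, pair_conj, pair_conj, conj_conj x.1, neg_neg]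

lemma mul_neg_and_neg_mul : ∀ {n : ℕ} (x y : CD n),
    x * (-y) = -(x * y) ∧ (-x) * y = -(x * y)
  | 0, x, y => ⟨by exact mul_neg (α := ℝ) x y, by exact neg_mul (α := ℝ) x y⟩
  | n + 1, x, y => by
    rw [eta x, eta y]
    refine ⟨?_, ?_⟩
    · rw [pair_neg, pair_mul, pair_mul, pair_neg, pair_eq_iff]
      refine ⟨?_, ?_⟩
      · rw [(mul_neg_and_neg_mul x.1 y.1).1, conj_neg y.2,
          (mul_neg_and_neg_mul (CD.conj y.2) x.2).2]
        abel
      · rw [(mul_neg_and_neg_mul y.2 x.1).2, conj_neg y.1,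
          (mul_neg_and_neg_mul x.2 (CD.conj y.1)).1]
        abel
    · rw [pair_neg, pair_mul, pair_mul, pair_neg, pair_eq_iff]
      refine ⟨?_, ?_⟩
      · rw [(mul_neg_and_neg_mul x.1 y.1).2, (mul_neg_and_neg_mul (CD.conj y.2) x.2).1]
        abel
      · rw [(mul_neg_and_neg_mul y.2 x.1).1, (mul_neg_and_neg_mul x.2 (CD.conj y.1)).2]
        abel

lemma mul_neg' {n : ℕ} (x y : CD n) : x * (-y) = -(x * y) := (mul_neg_and_neg_mul x y).1
lemma neg_mul' {n : ℕ} (x y : CD n) : (-x) * y = -(x * y) := (mul_neg_and_neg_mul x y).2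

lemma inner_comm : ∀ {n : ℕ} (x y : CD n), CD.inner x y = CD.inner y x
  | 0, x, y => by exact mul_comm (G := ℝ) x y
  | n + 1, x, y => by
    rw [eta x, eta y, pair_inner, pair_inner, inner_comm x.1 y.1, inner_comm x.2 y.2]

lemma inner_neg_left : ∀ {n : ℕ} (x y : CD n), CD.inner (-x) y = -CD.inner x y
  | 0, x, y => by exact neg_mul (α := ℝ) x y
  | n + 1, x, y => by
    rw [eta x, eta y, pair_neg, pair_inner, pair_inner,
      inner_neg_left x.1 y.1, inner_neg_left x.2 y.2]; ring

lemma inner_neg_right {n : ℕ} (x y : CD n) : CD.inner x (-y) = -CD.inner x y := by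
  rw [inner_comm, inner_neg_left, inner_comm]

lemma inner_conj_conj : ∀ {n : ℕ} (x y : CD n),
    CD.inner (CD.conj x) (CD.conj y) = CD.inner x y
  | 0, _, _ => rfl
  | n + 1, x, y => by
    rw [eta x, eta y, pair_conj, pair_conj, pair_inner, pair_inner,
      inner_conj_conj x.1 y.1, inner_neg_left, inner_neg_right, neg_neg]

lemma inner_smul_left : ∀ {n : ℕ} (r : ℝ) (x y : CD n),
    CD.inner (r • x) y = r * CD.inner x y
  | 0, r, x, y => by
    show (r * (show ℝ from x)) * (show ℝ from y) = r * ((show ℝ from x) * (show ℝ from y))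
    ring
  | n + 1, r, x, y => by
    rw [eta x, eta y, pair_smul, pair_inner, pair_inner,
      inner_smul_left r x.1 y.1, inner_smul_left r x.2 y.2]; ring

lemma inner_e0_e0 : ∀ {n : ℕ}, CD.inner (e0 n) (e0 n) = 1
  | 0 => by exact mul_one (M := ℝ) 1
  | n + 1 => by
    rw [e0_succ, pair_inner, inner_e0_e0]
    have : CD.inner (0 : CD n) (0 : CD n) = 0 := by
      have h := inner_smul_left (n := n) 0 0 0
      simpa using h
    rw [this, add_zero]

lemma smul_e0_inj {n : ℕ} {r s : ℝ} (h : r • e0 n = s • e0 n) : r = s := by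
  have := congrArg (fun t => CD.inner t (e0 n)) h
  simpa [inner_smul_left, inner_e0_e0] using this

lemma smul_e0_eq_iff {n : ℕ} {r s : ℝ} : r • e0 n = s • e0 n ↔ r = s :=
  ⟨smul_e0_inj, fun h => by rw [h]⟩

lemma trace_mul : ∀ {n : ℕ} (x y : CD n),
    x * CD.conj y + y * CD.conj x = (2 * CD.inner x y) • e0 n
  | 0, x, y => by
    show (show ℝ from x) * (show ℝ from y) + (show ℝ from y) * (show ℝ from x)
      = (2 * ((show ℝ from x) * (show ℝ from y))) * 1
    ring
  | n + 1, x, y => by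
    rw [eta x, eta y, pair_conj, pair_conj, pair_mul, pair_mul, pair_add,
      e0_succ, pair_smul, smul_zero, pair_eq_iff]
    refine ⟨?_, ?_⟩
    · rw [conj_neg, conj_neg, neg_mul', neg_mul', sub_neg_eq_add, sub_neg_eq_add]
      have h1 := trace_mul x.1 y.1
      have h2 := trace_mul (CD.conj y.2) (CD.conj x.2)
      rw [conj_conj, conj_conj, inner_conj_conj, inner_comm y.2 x.2] at h2
      calc x.1 * CD.conj y.1 + CD.conj y.2 * x.2 + (y.1 * CD.conj x.1 + CD.conj x.2 * y.2)
          = (x.1 * CD.conj y.1 + y.1 * CD.conj x.1)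
            + (CD.conj y.2 * x.2 + CD.conj x.2 * y.2) := by abel
        _ = (2 * CD.inner x.1 y.1) • e0 n + (2 * CD.inner x.2 y.2) • e0 n := by rw [h1, h2]
        _ = (2 * (CD.inner x.1 y.1 + CD.inner x.2 y.2)) • e0 n := by rw [← add_smul]; ring_nf
        _ = (2 * CD.inner (pair x.1 x.2) (pair y.1 y.2)) • e0 n := by rw [pair_inner]
    · rw [conj_conj, conj_conj, neg_mul', neg_mul']
      abel

lemma pure_conj {n : ℕ} {x : CD n} (hx : IsPure x) : CD.conj x = -x :=
  eq_neg_of_add_eq_zero_right hx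

lemma pure_mul_add {n : ℕ} {x y : CD n} (hx : IsPure x) (hy : IsPure y) :
    x * y + y * x = (-(2 * CD.inner x y)) • e0 n := by
  have h := trace_mul x y
  rw [pure_conj hy, pure_conj hx, mul_neg', mul_neg'] at h
  have : x * y + y * x = -((2 * CD.inner x y) • e0 n) := by
    rw [← h]; abel
  rw [this, neg_smul]

end CD

namespace CD
set_option linter.dupNamespace false

lemma eq_shuffle {G : Type*} [AddCommGroup G] {p q r s : G} (h : p - q = r - s) :
    (p = q) ↔ (r = s) := by
  rw [← sub_eq_zero, h, sub_eq_zero]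

lemma statement2_aux (m : ℕ) (a1 a2 b1 b2 : CD m)
    (ha1 : IsPure a1) (ha2 : IsPure a2) (hb1 : IsPure b1) (hb2 : IsPure b2) :
    (CD.inner (CD.tilde (pair a1 a2)) (pair b1 b2) = 0 ↔
      pair a1 a2 * pair b1 b2 = CD.tilde (pair b1 b2) * CD.tilde (pair a1 a2)) ∧
    ((CD.inner (pair a1 a2) (pair b1 b2) = 0 ∧
        CD.inner (CD.tilde (pair a1 a2)) (pair b1 b2) = 0) ↔
      CD.tilde (pair a1 a2) * pair b1 b2 = pair a1 a2 * CD.tilde (pair b1 b2)) := by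
  have hT : CD.inner (CD.tilde (pair a1 a2)) (pair b1 b2)
      = CD.inner a1 b2 - CD.inner a2 b1 := by
    rw [pair_tilde, pair_inner, inner_neg_left]; ring
  have hA : CD.inner (pair a1 a2) (pair b1 b2) = CD.inner a1 b1 + CD.inner a2 b2 :=
    pair_inner a1 a2 b1 b2
  have hab : pair a1 a2 * pair b1 b2
      = pair (a1 * b1 + b2 * a2) (b2 * a1 - a2 * b1) := by
    rw [pair_mul]
    simp only [pure_conj hb1, pure_conj hb2, mul_neg', neg_mul', neg_neg]
    rw [pair_eq_iff]; exact ⟨by abel, by abel⟩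
  have htbta : CD.tilde (pair b1 b2) * CD.tilde (pair a1 a2)
      = pair (a1 * b1 + b2 * a2) (b1 * a2 - a1 * b2) := by
    rw [pair_tilde, pair_tilde, pair_mul]
    simp only [pure_conj ha1, pure_conj ha2, conj_neg, mul_neg', neg_mul', neg_neg]
    rw [pair_eq_iff]; exact ⟨by abel, by abel⟩
  have htab : CD.tilde (pair a1 a2) * pair b1 b2
      = pair (b2 * a1 - a2 * b1) (-(b2 * a2) - a1 * b1) := by
    rw [pair_tilde, pair_mul]
    simp only [pure_conj hb1, pure_conj hb2, mul_neg', neg_mul', neg_neg]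
    rw [pair_eq_iff]; exact ⟨by abel, by abel⟩
  have hatb : pair a1 a2 * CD.tilde (pair b1 b2)
      = pair (b1 * a2 - a1 * b2) (b1 * a1 + a2 * b2) := by
    rw [pair_tilde, pair_mul]
    simp only [pure_conj hb1, pure_conj hb2, conj_neg, mul_neg', neg_mul', neg_neg]
    rw [pair_eq_iff]; exact ⟨by abel, by abel⟩
  have key5 : (b2 * a1 - a2 * b1 = b1 * a2 - a1 * b2) ↔
      (CD.inner a1 b2 = CD.inner a2 b1) := by
    rw [eq_shuffle (show (b2 * a1 - a2 * b1) - (b1 * a2 - a1 * b2)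
        = (a1 * b2 + b2 * a1) - (a2 * b1 + b1 * a2) from by abel),
      pure_mul_add ha1 hb2, pure_mul_add ha2 hb1, smul_e0_eq_iff]
    constructor <;> intro h <;> linarith
  have key6 : (-(b2 * a2) - a1 * b1 = b1 * a1 + a2 * b2) ↔
      (CD.inner a1 b1 + CD.inner a2 b2 = 0) := by
    rw [eq_shuffle (show (-(b2 * a2) - a1 * b1) - (b1 * a1 + a2 * b2)
        = (0 : CD m) - ((a1 * b1 + b1 * a1) + (a2 * b2 + b2 * a2)) from by abel),
      pure_mul_add ha1 hb1, pure_mul_add ha2 hb2, ← add_smul,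
      show (0 : CD m) = (0 : ℝ) • e0 m from (zero_smul ℝ (e0 m)).symm,
      smul_e0_eq_iff]
    constructor <;> intro h <;> linarith
  constructor
  · rw [hT, hab, htbta, pair_eq_iff]
    constructor
    · intro h; exact ⟨rfl, key5.mpr (by linarith)⟩
    · rintro ⟨-, h⟩; have := key5.mp h; linarith
  · rw [hA, hT, htab, hatb, pair_eq_iff]
    constructor
    · rintro ⟨h1, h2⟩; exact ⟨key5.mpr (by linarith), key6.mpr h1⟩
    · rintro ⟨h1, h2⟩
      have := key5.mp h1
      exact ⟨key6.mp h2, by linarith⟩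

end CD

/-- For `n ≥ 2` and doubly pure `a, b ∈ A n`:
(5) `⟨ã, b⟩ = 0 ↔ a·b = b̃·ã`;
(6) `⟨a,b⟩ = 0 ∧ ⟨ã,b⟩ = 0 ↔ ã·b = a·b̃`. -/
theorem statement2 (n : ℕ) (hn : 2 ≤ n) (a b : CD n)
    (ha : CD.IsDoublyPure a) (hb : CD.IsDoublyPure b) :
    (CD.inner (CD.tilde a) b = 0 ↔ a * b = CD.tilde b * CD.tilde a) ∧
    ((CD.inner a b = 0 ∧ CD.inner (CD.tilde a) b = 0) ↔
      CD.tilde a * b = a * CD.tilde b) := by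
  obtain ⟨m, rfl⟩ : ∃ m, n = m + 1 := ⟨n - 1, by omega⟩
  exact CD.statement2_aux m a.1 a.2 b.1 b.2 ha.1 ha.2 hb.1 hb.2
end
end

section
/- For n ≥ 1, the algebra monomorphisms from A_1 = ℂ to A_n are exactly the maps φ_w(re₀ + se₁) = re₀ + sw for w a pure element of A_n with ‖w‖ = 1: every such φ_w is an algebra monomorphism, and every algebra monomorphism φ : A_1 → A_n equals φ_w for w = φ(e₁). Hence 𝓜(A_1; A_n) is in bijection with the unit sphere S^{2^n−2} of the pure part of A_n. -/
noncomputable section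

/-- An algebra monomorphism `A m → A n`: an injective `ℝ`-linear map preserving
the unit and multiplication. -/
def IsMono {m n : ℕ} (φ : CD m →ₗ[ℝ] CD n) : Prop :=
  Function.Injective φ ∧ φ (CD.e0 m) = CD.e0 n ∧ ∀ x y, φ (x * y) = φ x * φ y

/-!
The Cayley–Dickson product is bilinear with two-sided unit `e₀`, every trace `x + x̄` is a real
multiple of `e₀`, and `x̄ x = ‖x‖² e₀`. A unital linear map on `A 1 = ℂ` is determined by the image
`w` of `e₁`, and it is multiplicative iff `w² = -e₀`. Writing `w̄ = t e₀ - w`, the identity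
`w̄ w = ‖w‖² e₀` turns `w² = -e₀` into `(1 - ‖w‖²) e₀ + t w = 0`; since no real multiple of `e₀`
squares to `-e₀`, the vectors `e₀, w` are independent, so `t = 0` and `‖w‖ = 1`.
-/

namespace CD

variable {n : ℕ}

section Pairs

variable (x y : CD (n + 1)) (r : ℝ)

@[simp] lemma fst_add : (x + y).1 = x.1 + y.1 := rfl
@[simp] lemma snd_add : (x + y).2 = x.2 + y.2 := rfl
@[simp] lemma fst_neg : (-x).1 = -x.1 := rfl
@[simp] lemma snd_neg : (-x).2 = -x.2 := rfl
@[simp] lemma fst_smul : (r • x).1 = r • x.1 := rfl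
@[simp] lemma snd_smul : (r • x).2 = r • x.2 := rfl
@[simp] lemma fst_mul : (x * y).1 = x.1 * y.1 - CD.conj y.2 * x.2 := rfl
@[simp] lemma snd_mul : (x * y).2 = y.2 * x.1 + x.2 * CD.conj y.1 := rfl
@[simp] lemma fst_e0 : (e0 (n + 1)).1 = e0 n := rfl
@[simp] lemma snd_e0 : (e0 (n + 1)).2 = 0 := rfl
@[simp] lemma fst_te0 : (te0 (n + 1)).1 = 0 := rfl
@[simp] lemma snd_te0 : (te0 (n + 1)).2 = e0 n := rfl
@[simp] lemma fst_conj : (CD.conj x).1 = CD.conj x.1 := rfl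
@[simp] lemma snd_conj : (CD.conj x).2 = -x.2 := rfl

end Pairs

lemma conj_add : ∀ {n : ℕ} (x y : CD n), CD.conj (x + y) = CD.conj x + CD.conj y
  | 0, _, _ => rfl
  | _ + 1, x, y => Prod.ext (conj_add x.1 y.1) (neg_add x.2 y.2)

lemma conj_smul : ∀ {n : ℕ} (r : ℝ) (x : CD n), CD.conj (r • x) = r • CD.conj x
  | 0, _, _ => rfl
  | _ + 1, r, x => Prod.ext (conj_smul r x.1) (smul_neg r x.2).symm

lemma conj_zero : ∀ {n : ℕ}, CD.conj (0 : CD n) = 0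
  | 0 => rfl
  | _ + 1 => Prod.ext conj_zero neg_zero

lemma conj_e0 : ∀ {n : ℕ}, CD.conj (e0 n) = e0 n
  | 0 => rfl
  | _ + 1 => Prod.ext conj_e0 neg_zero

lemma mul_add_and_add_mul : ∀ n : ℕ,
    (∀ x y z : CD n, x * (y + z) = x * y + x * z) ∧
    (∀ x y z : CD n, (x + y) * z = x * z + y * z)
  | 0 => ⟨mul_add (R := ℝ), add_mul (R := ℝ)⟩
  | n + 1 => by
    obtain ⟨hl, hr⟩ := mul_add_and_add_mul n
    refine ⟨fun x y z => Prod.ext ?_ ?_, fun x y z => Prod.ext ?_ ?_⟩ <;>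
      simp only [fst_mul, snd_mul, fst_add, snd_add, conj_add, hl, hr] <;> abel

lemma smul_mul_and_mul_smul : ∀ n : ℕ,
    (∀ (r : ℝ) (x y : CD n), (r • x) * y = r • (x * y)) ∧
    (∀ (r : ℝ) (x y : CD n), x * (r • y) = r • (x * y))
  | 0 => ⟨mul_assoc (G := ℝ), fun r x y => mul_left_comm (G := ℝ) x r y⟩
  | n + 1 => by
    obtain ⟨hl, hr⟩ := smul_mul_and_mul_smul n
    refine ⟨fun r x y => Prod.ext ?_ ?_, fun r x y => Prod.ext ?_ ?_⟩ <;>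
      simp only [fst_mul, snd_mul, fst_smul, snd_smul, conj_smul, hl, hr, smul_sub, smul_add]

scoped instance instNonUnitalNonAssocRing (n : ℕ) : NonUnitalNonAssocRing (CD n) where
  __ := instAddCommGroup n
  __ := instMul n
  left_distrib := (mul_add_and_add_mul n).1
  right_distrib := (mul_add_and_add_mul n).2
  zero_mul x := by
    have h := (mul_add_and_add_mul n).2 0 0 x
    rwa [add_zero, left_eq_add] at h
  mul_zero x := by
    have h := (mul_add_and_add_mul n).1 x 0 0
    rwa [add_zero, left_eq_add] at h

scoped instance (n : ℕ) : IsScalarTower ℝ (CD n) (CD n) := ⟨(smul_mul_and_mul_smul n).1⟩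

scoped instance (n : ℕ) : SMulCommClass ℝ (CD n) (CD n) :=
  ⟨fun r x y => ((smul_mul_and_mul_smul n).2 r x y).symm⟩

lemma mul_e0 : ∀ {n : ℕ} (x : CD n), x * e0 n = x
  | 0, x => mul_one (M := ℝ) x
  | _ + 1, x => Prod.ext
      (by simp only [fst_mul, fst_e0, snd_e0, mul_e0 x.1, conj_zero, zero_mul, sub_zero])
      (by simp only [snd_mul, fst_e0, snd_e0, zero_mul, conj_e0, mul_e0 x.2, zero_add])

lemma e0_mul : ∀ {n : ℕ} (x : CD n), e0 n * x = x
  | 0, x => one_mul (M := ℝ) x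
  | _ + 1, x => Prod.ext
      (by simp only [fst_mul, fst_e0, snd_e0, e0_mul x.1, mul_zero, sub_zero])
      (by simp only [snd_mul, fst_e0, snd_e0, mul_e0 x.2, zero_mul, add_zero])

lemma e0_ne_zero : ∀ {n : ℕ}, e0 n ≠ 0
  | 0 => one_ne_zero (α := ℝ)
  | _ + 1 => fun h => e0_ne_zero (congrArg Prod.fst h)

lemma te0_mul_te0 : te0 (n + 1) * te0 (n + 1) = -e0 (n + 1) :=
  Prod.ext
    (by simp only [fst_mul, fst_te0, snd_te0, fst_neg, fst_e0, conj_e0, e0_mul, mul_zero, zero_sub])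
    (by simp only [snd_mul, fst_te0, snd_te0, snd_neg, snd_e0, conj_zero, mul_zero, neg_zero,
      add_zero])

lemma exists_add_conj_eq_smul_e0 : ∀ {n : ℕ} (x : CD n), ∃ t : ℝ, x + CD.conj x = t • e0 n
  | 0, x => ⟨x + x, (mul_one (M := ℝ) _).symm⟩
  | _ + 1, x => by
    obtain ⟨t, ht⟩ := exists_add_conj_eq_smul_e0 x.1
    exact ⟨t, Prod.ext ht
      (by simp only [snd_add, snd_conj, snd_smul, snd_e0, add_neg_cancel, smul_zero])⟩

lemma conj_mul_self : ∀ {n : ℕ} (x : CD n), CD.conj x * x = CD.inner x x • e0 n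
  | 0, x => (mul_one (M := ℝ) _).symm
  | _ + 1, x => Prod.ext
      (by simp only [fst_mul, fst_conj, snd_conj, mul_neg, sub_neg_eq_add, conj_mul_self x.1,
        conj_mul_self x.2, fst_add, fst_smul, fst_e0, CD.inner, add_smul])
      (by simp only [snd_mul, snd_conj, fst_conj, neg_mul, add_neg_cancel, snd_smul, snd_e0,
        smul_zero])

lemma linearIndependent_e0_of_mul_self_eq_neg_e0 {w : CD n} (hw : w * w = -e0 n) :
    LinearIndependent ℝ ![e0 n, w] := by
  refine (LinearIndependent.pair_iff' e0_ne_zero).2 fun c hc => ?_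
  have hcc : (c * c + 1) • e0 n = 0 := by
    rw [add_smul, one_smul, ← e0_mul (e0 n), ← smul_mul_smul_comm, hc, hw, e0_mul,
      neg_add_cancel]
  exact e0_ne_zero ((smul_eq_zero_iff_right (by nlinarith [mul_self_nonneg c])).1 hcc)

lemma mul_self_eq_neg_e0_iff {w : CD n} : w * w = -e0 n ↔ IsPure w ∧ CD.norm w = 1 := by
  rw [CD.norm, Real.sqrt_eq_one]
  constructor
  · intro hw
    obtain ⟨t, ht⟩ := exists_add_conj_eq_smul_e0 w
    have hconj : CD.conj w = t • e0 n - w := eq_sub_of_add_eq' ht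
    have key : (1 - CD.inner w w) • e0 n + t • w = 0 := by
      have h := conj_mul_self w
      rw [hconj, sub_mul, smul_mul_assoc, e0_mul, hw] at h
      rw [sub_smul, one_smul, ← h]
      abel
    obtain ⟨hq, rfl⟩ := (LinearIndependent.pair_iff.1
      (linearIndependent_e0_of_mul_self_eq_neg_e0 hw)) _ _ key
    exact ⟨by rw [IsPure, ht, zero_smul], by linarith⟩
  · rintro ⟨hpure, hnorm⟩
    have h := conj_mul_self w
    rwa [eq_neg_of_add_eq_zero_right hpure, neg_mul, hnorm, one_smul, neg_eq_iff_eq_neg] at h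

def re (x : CD 1) : ℝ := x.1

def im (x : CD 1) : ℝ := x.2

lemma re_smul_e0_add_im_smul_te0 (x : CD 1) : re x • e0 1 + im x • te0 1 = x :=
  Prod.ext (show re x * 1 + im x * 0 = re x by ring) (show re x * 0 + im x * 1 = im x by ring)

lemma re_mul (x y : CD 1) : re (x * y) = re x * re y - im x * im y :=
  show re x * re y - im y * im x = _ by ring

lemma im_mul (x y : CD 1) : im (x * y) = re x * im y + im x * re y :=
  show im y * re x + im x * re y = _ by ring

/-- The paper's `φ_w`; cf. `Complex.liftAux`. -/
def liftAux (w : CD n) : CD 1 →ₗ[ℝ] CD n where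
  toFun x := re x • e0 n + im x • w
  map_add' x y := show (re x + re y) • e0 n + (im x + im y) • w = _ by module
  map_smul' r x :=
    show (r * re x) • e0 n + (r * im x) • w = r • (re x • e0 n + im x • w) by module

lemma liftAux_apply (w : CD n) (x : CD 1) : liftAux w x = re x • e0 n + im x • w := rfl

lemma liftAux_te0 (w : CD n) : liftAux w (te0 1) = w :=
  show (0 : ℝ) • e0 n + (1 : ℝ) • w = w by module

lemma isMono_liftAux {w : CD n} (hw : w * w = -e0 n) : IsMono (liftAux w) := by
  refine ⟨?_, show (1 : ℝ) • e0 n + (0 : ℝ) • w = e0 n by module, fun x y => ?_⟩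
  · refine (injective_iff_map_eq_zero _).2 fun x hx => ?_
    obtain ⟨hre, him⟩ := LinearIndependent.pair_iff.1
      (linearIndependent_e0_of_mul_self_eq_neg_e0 hw) _ _ hx
    rw [← re_smul_e0_add_im_smul_te0 x, hre, him, zero_smul, zero_smul, add_zero]
  · simp only [liftAux_apply, re_mul, im_mul, add_mul, mul_add, smul_mul_smul_comm, e0_mul,
      mul_e0, hw]
    module

lemma eq_liftAux_of_isMono {φ : CD 1 →ₗ[ℝ] CD n} (hφ : IsMono φ) :
    φ = liftAux (φ (te0 1)) := by
  ext x
  conv_lhs => rw [← re_smul_e0_add_im_smul_te0 x]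
  rw [map_add, map_smul, map_smul, hφ.2.1, liftAux_apply]

lemma map_te0_mul_self_of_isMono {φ : CD 1 →ₗ[ℝ] CD n} (hφ : IsMono φ) :
    φ (te0 1) * φ (te0 1) = -e0 n := by
  rw [← hφ.2.2, te0_mul_te0, map_neg, hφ.2.1]

def monoEquivSphere :
    {w : CD n // IsPure w ∧ CD.norm w = 1} ≃ {φ : CD 1 →ₗ[ℝ] CD n // IsMono φ} where
  toFun w := ⟨liftAux w, isMono_liftAux (mul_self_eq_neg_e0_iff.2 w.2)⟩
  invFun φ := ⟨φ.1 (te0 1), mul_self_eq_neg_e0_iff.1 (map_te0_mul_self_of_isMono φ.2)⟩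
  left_inv w := Subtype.ext (liftAux_te0 w.1)
  right_inv φ := Subtype.ext (eq_liftAux_of_isMono φ.2).symm

end CD

theorem statement16_general (n : ℕ) :
    (∀ w : CD n, CD.IsPure w → CD.norm w = 1 →
      ∃ φ : CD 1 →ₗ[ℝ] CD n, IsMono φ ∧
        ∀ x : CD 1, φ x = (show ℝ from x.1) • CD.e0 n + (show ℝ from x.2) • w) ∧
    (∀ φ : CD 1 →ₗ[ℝ] CD n, IsMono φ →
      CD.IsPure (φ (CD.te0 1)) ∧ CD.norm (φ (CD.te0 1)) = 1 ∧
      ∀ x : CD 1, φ x =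
        (show ℝ from x.1) • CD.e0 n + (show ℝ from x.2) • φ (CD.te0 1)) ∧
    (∃ F : {w : CD n // CD.IsPure w ∧ CD.norm w = 1} →
        {φ : CD 1 →ₗ[ℝ] CD n // IsMono φ},
      Function.Bijective F ∧ ∀ w, (F w : CD 1 →ₗ[ℝ] CD n) (CD.te0 1) = (w : CD n)) := by
  refine ⟨fun w hpure hnorm => ?_, fun φ hφ => ?_, ?_⟩
  · exact ⟨CD.liftAux w, CD.isMono_liftAux (CD.mul_self_eq_neg_e0_iff.2 ⟨hpure, hnorm⟩),
      CD.liftAux_apply w⟩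
  · obtain ⟨hpure, hnorm⟩ := CD.mul_self_eq_neg_e0_iff.1 (CD.map_te0_mul_self_of_isMono hφ)
    exact ⟨hpure, hnorm, LinearMap.congr_fun (CD.eq_liftAux_of_isMono hφ)⟩
  · exact ⟨CD.monoEquivSphere, CD.monoEquivSphere.bijective, fun w => CD.liftAux_te0 w.1⟩

/-- For `n ≥ 1`, the algebra monomorphisms `A 1 = ℂ → A n` are exactly
the maps `φ_w(re₀ + se₁) = re₀ + sw` for `w` pure with `‖w‖ = 1`; hence
`𝓜(A 1; A n)` is in bijection with the unit sphere of the pure part of `A n`.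
(Here `e₁ = ẽ₀ ∈ A 1`, and `x = (x.1, x.2) = x.1·e₀ + x.2·e₁` for `x ∈ A 1 = ℝ × ℝ`.) -/
theorem statement16 (n : ℕ) (hn : 1 ≤ n) :
    (∀ w : CD n, CD.IsPure w → CD.norm w = 1 →
      ∃ φ : CD 1 →ₗ[ℝ] CD n, IsMono φ ∧
        ∀ x : CD 1, φ x = (show ℝ from x.1) • CD.e0 n + (show ℝ from x.2) • w) ∧
    (∀ φ : CD 1 →ₗ[ℝ] CD n, IsMono φ →
      CD.IsPure (φ (CD.te0 1)) ∧ CD.norm (φ (CD.te0 1)) = 1 ∧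
      ∀ x : CD 1, φ x =
        (show ℝ from x.1) • CD.e0 n + (show ℝ from x.2) • φ (CD.te0 1)) ∧
    (∃ F : {w : CD n // CD.IsPure w ∧ CD.norm w = 1} →
        {φ : CD 1 →ₗ[ℝ] CD n // IsMono φ},
      Function.Bijective F ∧ ∀ w, (F w : CD 1 →ₗ[ℝ] CD n) (CD.te0 1) = (w : CD n)) :=
  statement16_general n
end
end
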